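/- Suppose F = α + a + *b + *β is a C¹ multivector field on an open Ω ⊆ ℝ³ satisfying DF = ikF with k ∈ ℂ. Then (∇α = ika and ∇β = ikb) if and only if dF = ik T⁻F, where T⁻F = ½(F − F̂) is the odd-grade part. Moreover, in this case F₁ = α + a satisfies DF₁ = ikF₁ and F₂ = *b + *β satisfies DF₂ = ikF₂. -/

import Mathlib

noncomputable section

/-- Complex Euclidean dot product (bilinear extension) on `ℂ³`. -/
def cdot (u v : Fin 3 → ℂ) : ℂ := u 0 * v 0 + u 1 * v 1 + u 2 * v 2

/-- Bilinear extension of the cross product to `ℂ³`. -/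
def ccross (u v : Fin 3 → ℂ) : Fin 3 → ℂ :=
  ![u 1 * v 2 - u 2 * v 1, u 2 * v 0 - u 0 * v 2, u 0 * v 1 - u 1 * v 0]

/-- The eight-dimensional complex Clifford algebra `Cl(ℂ³)` of `ℝ³`, identified
as a linear space with `∧ℂ³`: a multivector is `w = α + a + *b + *β` with
scalar part `α`, vector part `a`, bivector part `*b` and 3-vector part `*β`. -/
structure Cl3 where
  α : ℂ
  a : Fin 3 → ℂ
  b : Fin 3 → ℂ
  β : ℂ

instance : Zero Cl3 := ⟨⟨0, 0, 0, 0⟩⟩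
instance : One Cl3 := ⟨⟨1, 0, 0, 0⟩⟩
instance : Add Cl3 := ⟨fun x y => ⟨x.α + y.α, x.a + y.a, x.b + y.b, x.β + y.β⟩⟩
instance : Neg Cl3 := ⟨fun x => ⟨-x.α, -x.a, -x.b, -x.β⟩⟩
instance : Sub Cl3 := ⟨fun x y => x + -y⟩
instance : SMul ℂ Cl3 := ⟨fun c x => ⟨c * x.α, c • x.a, c • x.b, c * x.β⟩⟩

/-- The Clifford product on `∧ℂ³`, with the convention `u u = |u|²` for
vectors `u`.  It is determined by the product of a vector with a multivector,
`u w = u·a + (uα − u×b) + *(u×a + uβ) + *(u·b)` for `w = α + a + *b + *β`. -/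
instance : Mul Cl3 := ⟨fun x y =>
  ⟨x.α * y.α + cdot x.a y.a - cdot x.b y.b - x.β * y.β,
   x.α • y.a + y.α • x.a - ccross x.a y.b - ccross x.b y.a - y.β • x.b - x.β • y.b,
   x.α • y.b + y.α • x.b + ccross x.a y.a - ccross x.b y.b + x.β • y.a + y.β • x.a,
   x.α * y.β + x.β * y.α + cdot x.a y.b + cdot x.b y.a⟩⟩

/-- The embedding of real vectors `ℝ³ ⊂ Cl(ℂ³)`. -/
def vec (u : Fin 3 → ℝ) : Cl3 := ⟨0, fun i => (u i : ℂ), 0, 0⟩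

/-- The grade involution `ŵ`: negation of the vector (degree-1) and 3-vector
(degree-3) parts. -/
def gradeInv (w : Cl3) : Cl3 := ⟨w.α, -w.a, w.b, -w.β⟩

/-- Exterior product of a complex vector with a multivector:
`u ∧ w = uα + *(u×a) + *(u·b)` for `w = α + a + *b + *β`. -/
def wedgeC (u : Fin 3 → ℂ) (w : Cl3) : Cl3 := ⟨0, w.α • u, ccross u w.a, cdot u w.b⟩

/-- Exterior product of a real vector with a multivector. -/
def wedgeVec (u : Fin 3 → ℝ) (w : Cl3) : Cl3 := wedgeC (fun i => (u i : ℂ)) w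

/-- Partial derivative `∂ᵢ f` of a complex-valued function on `ℝ³`. -/
def pdC (i : Fin 3) (f : (Fin 3 → ℝ) → ℂ) (x : Fin 3 → ℝ) : ℂ :=
  fderiv ℝ f x (Pi.single i 1)

/-- Componentwise partial derivative `∂ᵢ F` of a multivector field. -/
def pdCl (i : Fin 3) (F : (Fin 3 → ℝ) → Cl3) (x : Fin 3 → ℝ) : Cl3 :=
  ⟨pdC i (fun y => (F y).α) x, fun j => pdC i (fun y => (F y).a j) x,
   fun j => pdC i (fun y => (F y).b j) x, pdC i (fun y => (F y).β) x⟩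

/-- The standard basis vector `eᵢ` of `ℝ³`. -/
def basisVec (i : Fin 3) : Fin 3 → ℝ := Pi.single i 1

/-- The Hodge–Dirac operator `D F = e₁ ∂₁F + e₂ ∂₂F + e₃ ∂₃F`, the nabla
symbol acting via the Clifford product. -/
def Dirac (F : (Fin 3 → ℝ) → Cl3) (x : Fin 3 → ℝ) : Cl3 :=
  vec (basisVec 0) * pdCl 0 F x + vec (basisVec 1) * pdCl 1 F x
    + vec (basisVec 2) * pdCl 2 F x

/-- The exterior derivative `d F = e₁ ∧ ∂₁F + e₂ ∧ ∂₂F + e₃ ∧ ∂₃F`, the nabla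
symbol acting via the exterior product. -/
def extDerivCl (F : (Fin 3 → ℝ) → Cl3) (x : Fin 3 → ℝ) : Cl3 :=
  wedgeVec (basisVec 0) (pdCl 0 F x) + wedgeVec (basisVec 1) (pdCl 1 F x)
    + wedgeVec (basisVec 2) (pdCl 2 F x)

/-- Divergence `∇·v` of a complex vector field on `ℝ³`. -/
def divC (v : (Fin 3 → ℝ) → Fin 3 → ℂ) (x : Fin 3 → ℝ) : ℂ :=
  pdC 0 (fun y => v y 0) x + pdC 1 (fun y => v y 1) x + pdC 2 (fun y => v y 2) x

/-- Curl `∇×v` of a complex vector field on `ℝ³`. -/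
def curlC (v : (Fin 3 → ℝ) → Fin 3 → ℂ) (x : Fin 3 → ℝ) : Fin 3 → ℂ :=
  ![pdC 1 (fun y => v y 2) x - pdC 2 (fun y => v y 1) x,
    pdC 2 (fun y => v y 0) x - pdC 0 (fun y => v y 2) x,
    pdC 0 (fun y => v y 1) x - pdC 1 (fun y => v y 0) x]

/-- Gradient `∇f` of a complex-valued function on `ℝ³`. -/
def gradC (f : (Fin 3 → ℝ) → ℂ) (x : Fin 3 → ℝ) : Fin 3 → ℂ :=
  fun i => pdC i f x

/-! Componentwise, `D F = ∇·a + (∇α − ∇×b) + *(∇×a + ∇β) + *(∇·b)` and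
`d F = ∇α + *(∇×a) + *(∇·b)`, while `T⁻F = a + *β`. Given `D F = ikF`, the grade-3 part
of `d F = ik T⁻F` holds automatically, so that equation says `∇α = ika` and `∇×a = 0`;
by the grade-2 part of the Dirac equation, `∇×a = 0` is `∇β = ikb`. Symmetrically
`∇α = ika` is `∇×b = 0`, and with both curls gone the Dirac equation of `F` splits into
those of `F₁` and `F₂`. -/

namespace Cl3

@[ext]
theorem ext {v w : Cl3} (hα : v.α = w.α) (ha : v.a = w.a) (hb : v.b = w.b)
    (hβ : v.β = w.β) : v = w := by
  cases v; cases w; congr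

theorem smul_eq_mk (c : ℂ) (w : Cl3) : c • w = ⟨c * w.α, c • w.a, c • w.b, c * w.β⟩ := rfl

theorem add_eq_mk (v w : Cl3) : v + w = ⟨v.α + w.α, v.a + w.a, v.b + w.b, v.β + w.β⟩ := rfl

theorem sub_eq_mk (v w : Cl3) : v - w = ⟨v.α - w.α, v.a - w.a, v.b - w.b, v.β - w.β⟩ := by
  change v + -w = _
  simp only [add_eq_mk, sub_eq_add_neg]
  rfl

theorem mul_eq_mk (v w : Cl3) : v * w =
    ⟨v.α * w.α + cdot v.a w.a - cdot v.b w.b - v.β * w.β,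
     v.α • w.a + w.α • v.a - ccross v.a w.b - ccross v.b w.a - w.β • v.b - v.β • w.b,
     v.α • w.b + w.α • v.b + ccross v.a w.a - ccross v.b w.b + v.β • w.a + w.β • v.a,
     v.α * w.β + v.β * w.α + cdot v.a w.b + cdot v.b w.a⟩ := rfl

theorem half_smul_sub_gradeInv (w : Cl3) :
    (1 / 2 : ℂ) • (w - gradeInv w) = ⟨0, w.a, 0, w.β⟩ := by
  ext <;> simp [smul_eq_mk, sub_eq_mk, gradeInv, ← two_mul]

end Cl3

theorem Dirac_eq (F : (Fin 3 → ℝ) → Cl3) (x : Fin 3 → ℝ) :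
    Dirac F x = ⟨divC (fun y => (F y).a) x,
      gradC (fun y => (F y).α) x - curlC (fun y => (F y).b) x,
      curlC (fun y => (F y).a) x + gradC (fun y => (F y).β) x,
      divC (fun y => (F y).b) x⟩ := by
  ext : 1 <;> try (funext j; fin_cases j)
  all_goals
    simp only [Dirac, Cl3.mul_eq_mk, Cl3.add_eq_mk, vec, basisVec, pdCl, cdot, ccross, divC, curlC,
      gradC, Pi.single_apply, Pi.add_apply, Pi.sub_apply, Pi.smul_apply, Pi.zero_apply, smul_eq_mul,
      Matrix.cons_val_zero, Matrix.cons_val_one, Matrix.cons_val_two, Fin.isValue, Fin.reduceEq,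
      Matrix.head_cons, Matrix.tail_cons, Fin.zero_eta, Fin.mk_one, Fin.reduceFinMk, ↓reduceIte,
      Complex.ofReal_one, Complex.ofReal_zero]
  all_goals ring

theorem extDerivCl_eq (F : (Fin 3 → ℝ) → Cl3) (x : Fin 3 → ℝ) :
    extDerivCl F x = ⟨0, gradC (fun y => (F y).α) x, curlC (fun y => (F y).a) x,
      divC (fun y => (F y).b) x⟩ := by
  ext : 1 <;> try (funext j; fin_cases j)
  all_goals
    simp only [extDerivCl, Cl3.add_eq_mk, wedgeVec, wedgeC, basisVec, pdCl, cdot, ccross, divC,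
      curlC, gradC, Pi.single_apply, Pi.add_apply, Pi.smul_apply, smul_eq_mul,
      Matrix.cons_val_zero, Matrix.cons_val_one, Matrix.cons_val_two, Fin.isValue, Fin.reduceEq,
      Matrix.head_cons, Matrix.tail_cons, Fin.zero_eta, Fin.mk_one, Fin.reduceFinMk, ↓reduceIte,
      Complex.ofReal_one, Complex.ofReal_zero]
  all_goals ring

@[simp]
theorem pdC_const (i : Fin 3) (c : ℂ) (x : Fin 3 → ℝ) : pdC i (fun _ => c) x = 0 := by
  simp [pdC]

@[simp]
theorem gradC_const (c : ℂ) (x : Fin 3 → ℝ) : gradC (fun _ => c) x = 0 := by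
  ext i; simp [gradC]

@[simp]
theorem curlC_const (c : Fin 3 → ℂ) (x : Fin 3 → ℝ) : curlC (fun _ => c) x = 0 := by
  ext i; fin_cases i <;> simp [curlC]

@[simp]
theorem divC_const (c : Fin 3 → ℂ) (x : Fin 3 → ℝ) : divC (fun _ => c) x = 0 := by
  simp [divC]

section DiracEigen

variable {F : (Fin 3 → ℝ) → Cl3} {x : Fin 3 → ℝ} {c : ℂ}

theorem Dirac_eq_smul_iff : Dirac F x = c • F x ↔
    divC (fun y => (F y).a) x = c * (F x).α ∧
    gradC (fun y => (F y).α) x - curlC (fun y => (F y).b) x = c • (F x).a ∧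
    curlC (fun y => (F y).a) x + gradC (fun y => (F y).β) x = c • (F x).b ∧
    divC (fun y => (F y).b) x = c * (F x).β := by
  rw [Dirac_eq, Cl3.smul_eq_mk, Cl3.mk.injEq]

theorem curlC_b_eq_zero_iff (hD : Dirac F x = c • F x) :
    curlC (fun y => (F y).b) x = 0 ↔ gradC (fun y => (F y).α) x = c • (F x).a := by
  rw [← (Dirac_eq_smul_iff.1 hD).2.1, eq_comm (a := gradC _ x), sub_eq_self]

theorem curlC_a_eq_zero_iff (hD : Dirac F x = c • F x) :
    curlC (fun y => (F y).a) x = 0 ↔ gradC (fun y => (F y).β) x = c • (F x).b := by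
  rw [← (Dirac_eq_smul_iff.1 hD).2.2.1, right_eq_add]

theorem gradC_eq_smul_iff_extDerivCl_eq_smul (hD : Dirac F x = c • F x) :
    (gradC (fun y => (F y).α) x = c • (F x).a ∧
        gradC (fun y => (F y).β) x = c • (F x).b) ↔
      extDerivCl F x = c • ((1 / 2 : ℂ) • (F x - gradeInv (F x))) := by
  rw [extDerivCl_eq, Cl3.half_smul_sub_gradeInv, Cl3.smul_eq_mk, Cl3.mk.injEq,
    ← curlC_a_eq_zero_iff hD, smul_zero, mul_zero]
  simp only [true_and, (Dirac_eq_smul_iff.1 hD).2.2.2, and_true]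

theorem Dirac_scalarVectorPart_eq_smul (hD : Dirac F x = c • F x)
    (hα : gradC (fun y => (F y).α) x = c • (F x).a)
    (hβ : gradC (fun y => (F y).β) x = c • (F x).b) :
    Dirac (fun y => (⟨(F y).α, (F y).a, 0, 0⟩ : Cl3)) x
      = c • (⟨(F x).α, (F x).a, 0, 0⟩ : Cl3) := by
  rw [Dirac_eq_smul_iff]
  simp [(Dirac_eq_smul_iff.1 hD).1, hα, (curlC_a_eq_zero_iff hD).2 hβ]

theorem Dirac_bivectorTrivectorPart_eq_smul (hD : Dirac F x = c • F x)
    (hα : gradC (fun y => (F y).α) x = c • (F x).a)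
    (hβ : gradC (fun y => (F y).β) x = c • (F x).b) :
    Dirac (fun y => (⟨0, 0, (F y).b, (F y).β⟩ : Cl3)) x
      = c • (⟨0, 0, (F x).b, (F x).β⟩ : Cl3) := by
  rw [Dirac_eq_smul_iff]
  simp [(Dirac_eq_smul_iff.1 hD).2.2.2, hβ, (curlC_b_eq_zero_iff hD).2 hα]

end DiracEigen

theorem helmholtz_constraint_general (Ω : Set (Fin 3 → ℝ))
    (k : ℂ) (F : (Fin 3 → ℝ) → Cl3)
    (hdirac : ∀ x ∈ Ω, Dirac F x = (Complex.I * k) • F x) :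
    ((∀ x ∈ Ω, gradC (fun y => (F y).α) x = (Complex.I * k) • (F x).a ∧
        gradC (fun y => (F y).β) x = (Complex.I * k) • (F x).b) ↔
      (∀ x ∈ Ω, extDerivCl F x
        = (Complex.I * k) • ((1 / 2 : ℂ) • (F x - gradeInv (F x))))) ∧
    ((∀ x ∈ Ω, gradC (fun y => (F y).α) x = (Complex.I * k) • (F x).a ∧
        gradC (fun y => (F y).β) x = (Complex.I * k) • (F x).b) →
      (∀ x ∈ Ω, Dirac (fun y => (⟨(F y).α, (F y).a, 0, 0⟩ : Cl3)) x
          = (Complex.I * k) • (⟨(F x).α, (F x).a, 0, 0⟩ : Cl3)) ∧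
      (∀ x ∈ Ω, Dirac (fun y => (⟨0, 0, (F y).b, (F y).β⟩ : Cl3)) x
          = (Complex.I * k) • (⟨0, 0, (F x).b, (F x).β⟩ : Cl3))) :=
  ⟨forall₂_congr fun x hx => gradC_eq_smul_iff_extDerivCl_eq_smul (hdirac x hx),
    fun hgrad =>
      ⟨fun x hx => Dirac_scalarVectorPart_eq_smul (hdirac x hx) (hgrad x hx).1 (hgrad x hx).2,
        fun x hx =>
          Dirac_bivectorTrivectorPart_eq_smul (hdirac x hx) (hgrad x hx).1 (hgrad x hx).2⟩⟩

/-- Let `F = α + a + *b + *β` be a `C¹` multivector field on an open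
`Ω ⊆ ℝ³` satisfying `D F = ik F`. Then `∇α = ika` and `∇β = ikb` on `Ω` if
and only if `d F = ik T⁻F` on `Ω`, where `T⁻F = ½(F − F̂)` is the odd-grade
part. Moreover, in this case `F₁ = α + a` and `F₂ = *b + *β` both satisfy
the Dirac equation `D Fᵢ = ik Fᵢ` on `Ω`. -/
theorem helmholtz_constraint (Ω : Set (Fin 3 → ℝ)) (hΩ : IsOpen Ω)
    (k : ℂ) (F : (Fin 3 → ℝ) → Cl3)
    (hreg : ∀ x ∈ Ω, DifferentiableAt ℝ (fun y => (F y).α) x ∧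
        (∀ j, DifferentiableAt ℝ (fun y => (F y).a j) x) ∧
        (∀ j, DifferentiableAt ℝ (fun y => (F y).b j) x) ∧
        DifferentiableAt ℝ (fun y => (F y).β) x)
    (hdirac : ∀ x ∈ Ω, Dirac F x = (Complex.I * k) • F x) :
    ((∀ x ∈ Ω, gradC (fun y => (F y).α) x = (Complex.I * k) • (F x).a ∧
        gradC (fun y => (F y).β) x = (Complex.I * k) • (F x).b) ↔
      (∀ x ∈ Ω, extDerivCl F x
        = (Complex.I * k) • ((1 / 2 : ℂ) • (F x - gradeInv (F x))))) ∧
    ((∀ x ∈ Ω, gradC (fun y => (F y).α) x = (Complex.I * k) • (F x).a ∧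
        gradC (fun y => (F y).β) x = (Complex.I * k) • (F x).b) →
      (∀ x ∈ Ω, Dirac (fun y => (⟨(F y).α, (F y).a, 0, 0⟩ : Cl3)) x
          = (Complex.I * k) • (⟨(F x).α, (F x).a, 0, 0⟩ : Cl3)) ∧
      (∀ x ∈ Ω, Dirac (fun y => (⟨0, 0, (F y).b, (F y).β⟩ : Cl3)) x
          = (Complex.I * k) • (⟨0, 0, (F x).b, (F x).β⟩ : Cl3))) :=
  helmholtz_constraint_general Ω k F hdirac
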